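/- Under the hypotheses of the iterative insphere algorithm (polyhedral cone K with nonempty interior, unit-norm constraint rows), the sequence of optimal solutions x_ℓ converges to the center x_∞ of the insphere of K, and the optimal values z_ℓ converge to the inradius z_∞. -/
import Mathlib


open RealInnerProductSpace

private lemma coord_abs_le_norm' {n : ℕ} (y : EuclideanSpace ℝ (Fin n)) (j : Fin n) :
    |y j| ≤ ‖y‖ := by
  rw [EuclideanSpace.norm_eq]
  have h1 : |y j| = Real.sqrt (‖y j‖ ^ 2) := by
    rw [Real.sqrt_sq_eq_abs, Real.norm_eq_abs, abs_abs]
  rw [h1]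
  exact Real.sqrt_le_sqrt
    (Finset.single_le_sum (fun i _ => sq_nonneg ‖y i‖) (Finset.mem_univ j))

theorem stmt_11 {n m : ℕ} [NeZero m] (k : Fin m → EuclideanSpace ℝ (Fin n))
    (hk : ∀ i, ‖k i‖ = 1)
    (hint : (interior {x : EuclideanSpace ℝ (Fin n) | ∀ i, 0 ≤ ⟪k i, x⟫}).Nonempty)
    (x : ℕ → EuclideanSpace ℝ (Fin n)) (z : ℕ → ℝ)
    (u : ℕ → EuclideanSpace ℝ (Fin n)) (hu : ∀ ℓ, u ℓ = ‖x ℓ‖⁻¹ • x ℓ)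
    (feas : ℕ → EuclideanSpace ℝ (Fin n) → ℝ → Prop)
    (hfeas : ∀ ℓ y w, feas ℓ y w ↔ 
      ((∀ i, w ≤ ⟪k i, y⟫) ∧ (∀ j : Fin n, |y j| ≤ 1) ∧ ∀ t < ℓ, ⟪u t, y⟫ ≤ 1))
    (hxfeas : ∀ ℓ, feas ℓ (x ℓ) (z ℓ))
    (hopt : ∀ ℓ y w, feas ℓ y w → w ≤ z ℓ)
    (xinf : EuclideanSpace ℝ (Fin n)) (zinf : ℝ)
    (hxinf : ‖xinf‖ ≤ 1 ∧
      ∀ y : EuclideanSpace ℝ (Fin n), ‖y‖ ≤ 1 → (⨅ i, ⟪k i, y⟫) ≤ ⨅ i, ⟪k i, xinf⟫)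
    (hzinf : zinf = ⨅ i, ⟪k i, xinf⟫) :
    Filter.Tendsto x Filter.atTop (nhds xinf) ∧
    Filter.Tendsto z Filter.atTop (nhds zinf) := by
  classical
  open Filter in
  have hm : Nonempty (Fin m) := ⟨⟨0, Nat.pos_of_ne_zero (NeZero.ne m)⟩⟩
  obtain ⟨i₀⟩ := hm
  have hm' : Nonempty (Fin m) := ⟨i₀⟩
  have hbdd : ∀ v : EuclideanSpace ℝ (Fin n), BddBelow (Set.range fun i => ⟪k i, v⟫) :=
    fun v => (Set.finite_range _).bddBelow
  have hzle : ∀ i, zinf ≤ ⟪k i, xinf⟫ := fun i => by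
    rw [hzinf]; exact ciInf_le (hbdd _) i
  have hCS : ∀ i (v : EuclideanSpace ℝ (Fin n)), ⟪k i, v⟫ ≤ ‖v‖ := fun i v => by
    calc ⟪k i, v⟫ ≤ ‖k i‖ * ‖v‖ := real_inner_le_norm _ _
    _ = ‖v‖ := by rw [hk i, one_mul]
  -- zinf is positive
  have hzpos : 0 < zinf := by
    obtain ⟨p, hp⟩ := hint
    obtain ⟨ε, hε, hball⟩ := Metric.isOpen_iff.1 isOpen_interior p hp
    have hpk : ∀ i, ε / 2 ≤ ⟪k i, p⟫ := by
      intro i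
      have hmem : p - (ε / 2) • k i ∈ Metric.ball p ε := by
        rw [Metric.mem_ball, dist_eq_norm]
        have h2 : p - (ε / 2) • k i - p = -((ε / 2) • k i) := by abel
        rw [h2, norm_neg, norm_smul, Real.norm_eq_abs, hk i,
          abs_of_pos (by linarith), mul_one]
        linarith
      have hS := interior_subset (hball hmem)
      have h0 : (0 : ℝ) ≤ ⟪k i, p - (ε / 2) • k i⟫ := hS i
      rw [inner_sub_right, real_inner_smul_right, real_inner_self_eq_norm_sq, hk i] at h0
      nlinarith
    have hppos : 0 < ‖p‖ :=
      lt_of_lt_of_le (by linarith) (le_trans (hpk i₀) (hCS i₀ p))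
    set q := ‖p‖⁻¹ • p with hq
    have hqnorm : ‖q‖ = 1 := by
      rw [hq, norm_smul, norm_inv, norm_norm, inv_mul_cancel₀ (ne_of_gt hppos)]
    have h1 : ε / 2 * ‖p‖⁻¹ ≤ ⨅ i, ⟪k i, q⟫ := by
      apply le_ciInf; intro i
      rw [hq, real_inner_smul_right]
      have := mul_le_mul_of_nonneg_left (hpk i) (inv_nonneg.2 hppos.le)
      linarith
    have h2 : (⨅ i, ⟪k i, q⟫) ≤ zinf := hzinf ▸ hxinf.2 q (le_of_eq hqnorm)
    have h3 : 0 < ε / 2 * ‖p‖⁻¹ := by positivity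
    linarith
  -- basic facts about x ℓ, z ℓ
  have hxz := fun ℓ => (hfeas ℓ (x ℓ) (z ℓ)).1 (hxfeas ℓ)
  have hzx : ∀ ℓ i, z ℓ ≤ ⟪k i, x ℓ⟫ := fun ℓ => (hxz ℓ).1
  have hbox : ∀ ℓ j, |x ℓ j| ≤ 1 := fun ℓ => (hxz ℓ).2.1
  have hcut : ∀ t ℓ, t < ℓ → ⟪u t, x ℓ⟫ ≤ 1 := fun t ℓ h => (hxz ℓ).2.2 t h
  have hunorm : ∀ t, ‖u t‖ ≤ 1 := fun t => by
    rw [hu t, norm_smul, norm_inv, norm_norm]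
    rcases eq_or_ne ‖x t‖ 0 with h | h
    · simp [h]
    · rw [inv_mul_cancel₀ h]
  -- xinf is feasible for every subproblem, hence zinf ≤ z ℓ
  have hxinf_feas : ∀ ℓ, feas ℓ xinf zinf := fun ℓ => by
    rw [hfeas]
    refine ⟨hzle, fun j => le_trans (coord_abs_le_norm' xinf j) hxinf.1, fun t _ => ?_⟩
    calc ⟪u t, xinf⟫ ≤ ‖u t‖ * ‖xinf‖ := real_inner_le_norm _ _
    _ ≤ 1 * 1 := by
        apply mul_le_mul (hunorm t) hxinf.1 (norm_nonneg _)
        exact zero_le_one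
    _ = 1 := one_mul 1
  have hzlb : ∀ ℓ, zinf ≤ z ℓ := fun ℓ => hopt ℓ xinf zinf (hxinf_feas ℓ)
  have hxnorm_lb : ∀ ℓ, zinf ≤ ‖x ℓ‖ :=
    fun ℓ => le_trans (hzlb ℓ) (le_trans (hzx ℓ i₀) (hCS i₀ _))
  have hxne : ∀ ℓ, 0 < ‖x ℓ‖ := fun ℓ => lt_of_lt_of_le hzpos (hxnorm_lb ℓ)
  -- the key cut inequality in unnormalized form
  have hkey : ∀ t ℓ, t < ℓ → ⟪x t, x ℓ⟫ ≤ ‖x t‖ := by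
    intro t ℓ h
    have h1 := hcut t ℓ h
    rw [hu t, real_inner_smul_left] at h1
    calc ⟪x t, x ℓ⟫ = ‖x t‖ * (‖x t‖⁻¹ * ⟪x t, x ℓ⟫) := by
          rw [← mul_assoc, mul_inv_cancel₀ (ne_of_gt (hxne t)), one_mul]
    _ ≤ ‖x t‖ * 1 := mul_le_mul_of_nonneg_left h1 (norm_nonneg _)
    _ = ‖x t‖ := mul_one _
  -- x ℓ lies in a fixed compact ball
  have hxbound : ∀ ℓ, x ℓ ∈ Metric.closedBall (0 : EuclideanSpace ℝ (Fin n)) (Real.sqrt n) := by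
    intro ℓ
    rw [Metric.mem_closedBall, dist_zero_right, EuclideanSpace.norm_eq]
    apply Real.sqrt_le_sqrt
    calc (∑ j, ‖x ℓ j‖ ^ 2) ≤ ∑ _j : Fin n, (1 : ℝ) := by
          apply Finset.sum_le_sum
          intro j _
          have h := hbox ℓ j
          rw [Real.norm_eq_abs]
          nlinarith [abs_nonneg (x ℓ j)]
    _ = n := by simp
  -- uniqueness of the insphere center
  have huniq : ∀ y : EuclideanSpace ℝ (Fin n), ‖y‖ ≤ 1 → (∀ i, zinf ≤ ⟪k i, y⟫) →
      y = xinf := by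
    intro y hy hyk
    by_contra hne
    set c := ‖y + xinf‖ with hc
    have hcl : 2 * zinf ≤ c := by
      have h1 : 2 * zinf ≤ ⟪k i₀, y + xinf⟫ := by
        rw [inner_add_right]
        linarith [hyk i₀, hzle i₀]
      exact le_trans h1 (hCS i₀ _)
    have hcpos : 0 < c := by linarith
    have hclt : c < 2 := by
      have hpar := norm_add_sq_real y xinf
      have hpar2 := norm_sub_sq_real y xinf
      have hne' : 0 < ‖y - xinf‖ := norm_pos_iff.2 (sub_ne_zero_of_ne hne)
      nlinarith [hxinf.1, hy, norm_nonneg y, norm_nonneg xinf]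
    set w := c⁻¹ • (y + xinf) with hw
    have hwnorm : ‖w‖ = 1 := by
      rw [hw, norm_smul, Real.norm_eq_abs, abs_inv, abs_of_pos hcpos,
        inv_mul_cancel₀ (ne_of_gt hcpos)]
    have h1 : 2 * zinf / c ≤ ⨅ i, ⟪k i, w⟫ := by
      apply le_ciInf; intro i
      rw [hw, real_inner_smul_right, inner_add_right, div_eq_inv_mul]
      apply mul_le_mul_of_nonneg_left _ (inv_nonneg.2 hcpos.le)
      linarith [hyk i, hzle i]
    have h2 : (⨅ i, ⟪k i, w⟫) ≤ zinf := hzinf ▸ hxinf.2 w (le_of_eq hwnorm)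
    have h3 : zinf < 2 * zinf / c := by
      rw [lt_div_iff₀ hcpos]; nlinarith
    linarith
  -- convergence of x
  have hxconv : Filter.Tendsto x Filter.atTop (nhds xinf) := by
    apply Filter.tendsto_of_subseq_tendsto
    intro ns hns
    have hcpt : IsCompact (Metric.closedBall (0 : EuclideanSpace ℝ (Fin n)) (Real.sqrt n)) :=
      isCompact_closedBall _ _
    obtain ⟨a, -, φ, hφ, ha⟩ := hcpt.tendsto_subseq (x := fun j => x (ns j))
      (fun j => hxbound (ns j))
    refine ⟨φ, ?_⟩
    suffices hax : a = xinf by rw [← hax]; exact ha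
    set σ : ℕ → ℕ := ns ∘ φ with hσ
    have hσtop : Filter.Tendsto σ Filter.atTop Filter.atTop :=
      hns.comp hφ.tendsto_atTop
    have ha' : Filter.Tendsto (fun j => x (σ j)) Filter.atTop (nhds a) := ha
    have hk_a : ∀ i, zinf ≤ ⟪k i, a⟫ := by
      intro i
      have hcont : Filter.Tendsto (fun j => ⟪k i, x (σ j)⟫) Filter.atTop (nhds ⟪k i, a⟫) :=
        ((continuous_const.inner continuous_id).tendsto a).comp ha'
      exact ge_of_tendsto' hcont (fun j => le_trans (hzlb _) (hzx _ i))
    have hnorm_a : ‖a‖ ≤ 1 := by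
      have step1 : ∀ j, ⟪x (σ j), a⟫ ≤ ‖x (σ j)‖ := by
        intro j
        have hcont : Filter.Tendsto (fun j' => ⟪x (σ j), x (σ j')⟫) Filter.atTop
            (nhds ⟪x (σ j), a⟫) :=
          ((continuous_const.inner continuous_id).tendsto a).comp ha'
        apply le_of_tendsto hcont
        filter_upwards [hσtop.eventually_gt_atTop (σ j)] with j' hj'
        exact hkey (σ j) (σ j') hj'
      have step2 : ⟪a, a⟫ ≤ ‖a‖ := by
        have hcont1 : Filter.Tendsto (fun j => ⟪x (σ j), a⟫) Filter.atTop (nhds ⟪a, a⟫) :=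
          ((continuous_id.inner continuous_const).tendsto a).comp ha'
        have hcont2 : Filter.Tendsto (fun j => ‖x (σ j)‖) Filter.atTop (nhds ‖a‖) :=
          (continuous_norm.tendsto a).comp ha'
        exact le_of_tendsto_of_tendsto' hcont1 hcont2 step1
      have hsq : ‖a‖ ^ 2 ≤ ‖a‖ := by
        rw [← real_inner_self_eq_norm_sq]; exact step2
      nlinarith [norm_nonneg a]
    exact huniq a hnorm_a hk_a
  -- convergence of z
  have hzanti : Antitone z := by
    apply antitone_nat_of_succ_le
    intro ℓ
    apply hopt ℓ (x (ℓ + 1)) (z (ℓ + 1))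
    rw [hfeas]
    obtain ⟨h1, h2, h3⟩ := (hfeas (ℓ + 1) _ _).1 (hxfeas (ℓ + 1))
    exact ⟨h1, h2, fun t ht => h3 t (Nat.lt_succ_of_lt ht)⟩
  have hbz : BddBelow (Set.range z) := by
    refine ⟨zinf, ?_⟩
    rintro w ⟨ℓ, rfl⟩
    exact hzlb ℓ
  have hzconv := tendsto_atTop_ciInf hzanti hbz
  have hL1 : zinf ≤ ⨅ ℓ, z ℓ := le_ciInf hzlb
  have hL2 : (⨅ ℓ, z ℓ) ≤ zinf := by
    rw [hzinf]
    apply le_ciInf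
    intro i
    have hcont : Filter.Tendsto (fun ℓ => ⟪k i, x ℓ⟫) Filter.atTop (nhds ⟪k i, xinf⟫) :=
      ((continuous_const.inner continuous_id).tendsto xinf).comp hxconv
    exact ge_of_tendsto' hcont (fun ℓ => le_trans (ciInf_le hbz ℓ) (hzx ℓ i))
  have hLz : (⨅ ℓ, z ℓ) = zinf := le_antisymm hL2 hL1
  exact ⟨hxconv, hLz ▸ hzconv⟩
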